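/- arXiv:2604.18222 — 3 statements merged into one kernel-verified Lean document; each statement's English description precedes it below -/
import Mathlib

section
/- Let μ be a Borel probability measure on ℝⁿ with compact support E, let a ∈ (0,1), ε > 0 and t > 0, and suppose there exist a closed set F with E ⊆ F, a Borel measure ν with ν(ℝⁿ \ F) = 0, and a constant c ≥ 1 such that c⁻¹ r^t ≤ ν(B(x,r)) ≤ c r^t for all x ∈ F and 0 < r < diam F. Then there exists a constant c₀ > 0, depending only on a, ε, t, n and c, such that for all 0 < ρ₀ ≤ 1/2: μ({x : there exist ρ and r with 0 < ρ < ρ₀ and ρ^a ≤ r ≤ 1 such that μ(B(x,r)) > (4r/ρ)^(t(1+ε)) μ(B(x,ρ))}) ≤ c₀ ρ₀^(tε(1−a)). -/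
open MeasureTheory Metric Filter Set Topology
open scoped ENNReal

noncomputable section
open scoped Classical

/-- The support of a Borel measure `μ`: the set of points all of whose
neighborhoods have positive measure. -/
def msupp {n : ℕ} (μ : Measure (EuclideanSpace ℝ (Fin n))) :
    Set (EuclideanSpace ℝ (Fin n)) :=
  {x | ∀ r : ℝ, 0 < r → 0 < μ (Metric.ball x r)}

/-- The Assouad dimension of a set `E ⊆ ℝⁿ`: the infimum of all `s ≥ 0` for which
there is `C > 0` such that for all `0 < r < R` and `x ∈ E`, the set `E ∩ B(x,R)`
can be covered by at most `C (R/r)^s` balls of radius `r`. -/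
def dimA {n : ℕ} (E : Set (EuclideanSpace ℝ (Fin n))) : ℝ :=
  sInf {s : ℝ | 0 ≤ s ∧ ∃ C : ℝ, 0 < C ∧ ∀ x ∈ E, ∀ r R : ℝ, 0 < r → r < R →
    ∃ F : Finset (EuclideanSpace ℝ (Fin n)), (F.card : ℝ) ≤ C * (R / r) ^ s ∧
      E ∩ Metric.closedBall x R ⊆ ⋃ y ∈ F, Metric.closedBall y r}

/-- The packing dimension of a measure:
`dim_P μ = sup {t ≥ 0 : liminf_{r→0} μ(B(x,r))/r^t = 0 for μ-a.e. x}`. -/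
def dimP {n : ℕ} (μ : Measure (EuclideanSpace ℝ (Fin n))) : ℝ :=
  sSup {t : ℝ | 0 ≤ t ∧ ∀ᵐ x ∂μ,
    Filter.liminf (fun r : ℝ =>
      μ (Metric.closedBall x r) / ENNReal.ofReal (r ^ t)) (𝓝[>] 0) = 0}

/-- The potential `F_m^μ(x,r) = ∫ min{1, r^m |x-y|^{-m}} dμ(y)`, with the convention
that the integrand equals `1` when `y = x`. -/
def Fpot {n : ℕ} (m : ℝ) (μ : Measure (EuclideanSpace ℝ (Fin n)))
    (x : EuclideanSpace ℝ (Fin n)) (r : ℝ) : ℝ≥0∞ :=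
  ∫⁻ y, ENNReal.ofReal (if y = x then 1 else min 1 (r ^ m * ‖x - y‖ ^ (-m))) ∂μ

/-- The `m`-dimensional packing dimension profile
`dim_P^m μ = sup {t ≥ 0 : liminf_{r→0} r^{-t} F_m^μ(x,r) = 0 for μ-a.e. x}`. -/
def dimPprofile {n : ℕ} (m : ℝ) (μ : Measure (EuclideanSpace ℝ (Fin n))) : ℝ :=
  sSup {t : ℝ | 0 ≤ t ∧ ∀ᵐ x ∂μ,
    Filter.liminf (fun r : ℝ => Fpot m μ x r / ENNReal.ofReal (r ^ t)) (𝓝[>] 0) = 0}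

/-- The potential
`F_{t,s,θ}^μ(x,r) = ∫ min{1, r^t |x-y|^{-t}, r^{θ(s-t)+t} |x-y|^{-s}} dμ(y)`,
with the convention that the integrand equals `1` when `y = x`. -/
def Ftheta {n : ℕ} (t s θ : ℝ) (μ : Measure (EuclideanSpace ℝ (Fin n)))
    (x : EuclideanSpace ℝ (Fin n)) (r : ℝ) : ℝ≥0∞ :=
  ∫⁻ y, ENNReal.ofReal (if y = x then 1 else
    min (min 1 (r ^ t * ‖x - y‖ ^ (-t))) (r ^ (θ * (s - t) + t) * ‖x - y‖ ^ (-s))) ∂μ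

/-- The `θ`-profile
`dim_{P,θ}^s μ = sup {t ∈ [0,s] : liminf_{r→0} r^{-t} F_{t,s,θ}^μ(x,r) = 0 for μ-a.e. x}`. -/
def dimPtheta {n : ℕ} (s θ : ℝ) (μ : Measure (EuclideanSpace ℝ (Fin n))) : ℝ :=
  sSup {t : ℝ | t ∈ Set.Icc 0 s ∧ ∀ᵐ x ∂μ,
    Filter.liminf (fun r : ℝ => Ftheta t s θ μ x r / ENNReal.ofReal (r ^ t)) (𝓝[>] 0) = 0}

/-- The critical point `D(μ) = inf_{θ ∈ (0,1)} dim_{P,θ}^n μ` of a measure on `ℝⁿ`. -/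
def Dcrit (n : ℕ) (μ : Measure (EuclideanSpace ℝ (Fin n))) : ℝ :=
  sInf ((fun θ : ℝ => dimPtheta (n : ℝ) θ μ) '' Set.Ioo 0 1)

/-!
For `0 < δ ≤ R` and `T > 0`, the points `x` with `T μ(B(x,δ)) < μ(B(x,R))` have measure at most
`M / T`, where `M` bounds the number of `δ/2`-balls needed to cover `F ∩ B(y,R)` uniformly in `y`,
for any `F` carrying `μ`. By Markov's inequality it suffices to bound
`∫ μ(B(x,R)) / μ(B(x,δ)) dμ(x)`, which by Fubini is `∫ ∫_{F ∩ B(y,R)} μ(B(x,δ))⁻¹ dμ(x) dμ(y)`;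
a `δ/2`-ball `B` contributes at most `μ(B)⁻¹ μ(B) ≤ 1` to the inner integral, as `B ⊆ B(x,δ)`
for `x ∈ B`.

For a `t`-regular `F`, a maximal `δ/2`-separated subset of `F ∩ B(y,R)` gives such a cover, and
comparing `ν`-masses of disjoint balls shows `M ≲ (R/δ)^t`. Rounding `ρ` down to `2^{-N}` and `r`
up to `2^{L-N}` (the factor `4` absorbs both roundings), the set of the theorem lies in the union
of the sets above with `T = 2^{Lt(1+ε)}`, each of measure `≲ 2^{-Ltε}`, over `L ≥ (1-a)N` and
`2^{-N} < ρ₀`. Summing the two geometric series gives `≲ ρ₀^{tε(1-a)}`.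
-/

lemma msupp_eq_support {n : ℕ} (μ : Measure (EuclideanSpace ℝ (Fin n))) :
    msupp μ = μ.support := by
  ext x
  exact Metric.nhds_basis_ball.mem_measureSupport.symm

lemma tsum_ite_pow_le {q : ℝ≥0∞} {P : ℕ → Prop} {n₀ : ℕ} (h : ∀ n, P n → n₀ ≤ n) :
    ∑' n, (if P n then q ^ n else 0) ≤ q ^ n₀ * (1 - q)⁻¹ := by
  rw [← ENNReal.summable.sum_add_tsum_nat_add' (k := n₀), ← ENNReal.tsum_geometric,
    ← ENNReal.tsum_mul_left]
  have hhead : ∑ n ∈ Finset.range n₀, (if P n then q ^ n else 0) = 0 :=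
    Finset.sum_eq_zero fun n hn => if_neg fun hP => (Finset.mem_range.1 hn).not_ge (h n hP)
  rw [hhead, zero_add]
  refine ENNReal.tsum_le_tsum fun n => ?_
  split_ifs
  · rw [pow_add, mul_comm]
  · exact zero_le

lemma tsum_ite_le_ofReal_rpow {q x : ℝ} (hq₀ : 0 < q) (hq₁ : q ≤ 1) :
    ∑' n : ℕ, (if x ≤ n then ENNReal.ofReal q ^ n else 0) ≤
      ENNReal.ofReal (q ^ x) * (1 - ENNReal.ofReal q)⁻¹ := by
  refine (tsum_ite_pow_le (n₀ := ⌈x⌉₊) fun n hn => Nat.ceil_le.2 hn).trans ?_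
  gcongr
  rw [← ENNReal.ofReal_pow hq₀.le, ← Real.rpow_natCast]
  exact ENNReal.ofReal_le_ofReal (Real.rpow_le_rpow_of_exponent_ge hq₀ hq₁ (Nat.le_ceil x))

lemma tsum_ite_inv_two_pow_lt_le {θ ρ₀ : ℝ} (hθ : 0 ≤ θ) (hρ₀ : 0 < ρ₀) :
    ∑' n : ℕ, (if (2 : ℝ)⁻¹ ^ n < ρ₀ then ENNReal.ofReal ((2 : ℝ)⁻¹ ^ θ) ^ n else 0) ≤
      ENNReal.ofReal (ρ₀ ^ θ) * (1 - ENNReal.ofReal ((2 : ℝ)⁻¹ ^ θ))⁻¹ := by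
  have hex : ∃ n : ℕ, (2 : ℝ)⁻¹ ^ n < ρ₀ := exists_pow_lt_of_lt_one hρ₀ (by norm_num)
  refine (tsum_ite_pow_le (n₀ := Nat.find hex) fun n hn => Nat.find_min' hex hn).trans ?_
  gcongr
  rw [← ENNReal.ofReal_pow (by positivity), Real.rpow_pow_comm (by norm_num)]
  exact ENNReal.ofReal_le_ofReal (Real.rpow_le_rpow (by positivity) (Nat.find_spec hex).le hθ)

lemma measure_iUnion_ite_le {α : Type*} [MeasurableSpace α] (μ : Measure α) (P : ℕ → Prop)
    (s : ℕ → Set α) : μ (⋃ n, ⋃ (_ : P n), s n) ≤ ∑' n, if P n then μ (s n) else 0 :=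
  (measure_iUnion_le _).trans (ENNReal.tsum_le_tsum fun n => by split_ifs with h <;> simp [h])

lemma exists_dyadic_scales {a ρ r : ℝ} (ha₀ : 0 ≤ a) (ha₁ : a ≤ 1) (hρ : 0 < ρ) (hρ₁ : ρ < 1)
    (hr : ρ ^ a ≤ r) :
    ∃ N L : ℕ, (2 : ℝ)⁻¹ ^ N < ρ ∧ (1 - a) * N ≤ L ∧ (2 : ℝ) ^ L ≤ 4 * r / ρ ∧
      r ≤ 2 ^ L * 2⁻¹ ^ N := by
  obtain ⟨m, hm₁, hm₂⟩ := exists_nat_pow_near_of_lt_one hρ hρ₁.le (by norm_num : (0 : ℝ) < 2⁻¹)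
    (by norm_num)
  set δ : ℝ := 2⁻¹ ^ (m + 1)
  have hδ : 0 < δ := by positivity
  have hρδ : ρ ≤ 2 * δ := hm₂.trans_eq (by simp only [δ, pow_succ]; ring)
  have hρr : ρ ≤ r := by
    simpa using (Real.rpow_le_rpow_of_exponent_ge hρ hρ₁.le ha₁).trans hr
  obtain ⟨ℓ, hℓ₁, hℓ₂⟩ := exists_nat_pow_near ((one_le_div hδ).2 (hm₁.le.trans hρr))
    (by norm_num : (1 : ℝ) < 2)
  rw [le_div_iff₀ hδ] at hℓ₁
  rw [div_lt_iff₀ hδ] at hℓ₂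
  refine ⟨m + 1, ℓ + 1, hm₁, ?_, ?_, hℓ₂.le⟩
  · have h : δ ^ a ≤ 2 ^ (ℓ + 1) * δ :=
      (Real.rpow_le_rpow hδ.le hm₁.le ha₀).trans (hr.trans hℓ₂.le)
    have hlog := Real.log_le_log (by positivity) h
    rw [Real.log_rpow hδ, Real.log_mul (by positivity) hδ.ne', Real.log_pow, Real.log_pow,
      Real.log_inv] at hlog
    have hlog2 := Real.log_pos one_lt_two
    push_cast at hlog ⊢
    nlinarith
  · rw [le_div_iff₀ hρ, pow_succ]
    nlinarith [pow_pos (two_pos : (0 : ℝ) < 2) ℓ]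

section Covering

variable {X : Type*} [PseudoMetricSpace X]

def HasCoveringBound (F : Set X) (K t : ℝ) : Prop :=
  ∀ y : X, ∀ δ R : ℝ, 0 < δ → δ ≤ R → ∃ s : Finset X,
    (s.card : ℝ) ≤ K * (R / δ) ^ t ∧ F ∩ closedBall y R ⊆ ⋃ z ∈ s, closedBall z (δ / 2)

lemma exists_finset_cover_of_forall_separated_card_le {S : Set X} {ε B : ℝ} (hε : 0 ≤ ε)
    (h : ∀ s : Finset X, ↑s ⊆ S → (s : Set X).Pairwise (fun p q => ε < dist p q) →
      (s.card : ℝ) ≤ B) :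
    ∃ s : Finset X, (s.card : ℝ) ≤ B ∧ S ⊆ ⋃ z ∈ s, closedBall z ε := by
  let Sep : Set (Finset X) := {s | ↑s ⊆ S ∧ (s : Set X).Pairwise (fun p q => ε < dist p q)}
  have hbdd : BddAbove (Finset.card '' Sep) :=
    ⟨⌊B⌋₊, by rintro _ ⟨s, hs, rfl⟩; exact Nat.le_floor (h s hs.1 hs.2)⟩
  have hne : (Finset.card '' Sep).Nonempty := ⟨0, ∅, by simp [Sep], rfl⟩
  obtain ⟨s, ⟨hsS, hsep⟩, hmax⟩ := Nat.sSup_mem hne hbdd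
  refine ⟨s, h s hsS hsep, fun z hz => ?_⟩
  by_contra hzs
  have hfar : ∀ p ∈ s, ε < dist z p := fun p hp => by
    by_contra hle
    exact hzs (mem_biUnion hp (mem_closedBall.2 (not_lt.1 hle)))
  have hzs' : z ∉ s := fun hz' => hzs (mem_biUnion hz' (mem_closedBall_self hε))
  have hins : insert z s ∈ Sep := by
    refine ⟨by simpa using insert_subset hz hsS, ?_⟩
    rw [Finset.coe_insert, pairwise_insert]
    exact ⟨hsep, fun p hp _ => ⟨hfar p hp, dist_comm z p ▸ hfar p hp⟩⟩
  have := le_csSup hbdd ⟨_, hins, rfl⟩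
  rw [Finset.card_insert_of_notMem hzs', ← hmax] at this
  omega

lemma exists_finset_cover_of_ediam_le {F : Set X} {K t δ R : ℝ} (hK : 1 ≤ K) (ht : 0 ≤ t)
    (hδ : 0 < δ) (hδR : δ ≤ R) (hF : ediam F ≤ ENNReal.ofReal (δ / 2)) (y : X) :
    ∃ s : Finset X, (s.card : ℝ) ≤ K * (R / δ) ^ t ∧
      F ∩ closedBall y R ⊆ ⋃ z ∈ s, closedBall z (δ / 2) := by
  have hK' : 1 ≤ K * (R / δ) ^ t := one_le_mul_of_one_le_of_one_le hK
    (Real.one_le_rpow ((one_le_div hδ).2 hδR) ht)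
  rcases F.eq_empty_or_nonempty with rfl | ⟨z, hz⟩
  · exact ⟨∅, by simpa using zero_le_one.trans hK', by simp⟩
  refine ⟨{z}, by simpa using hK', fun x hx => ?_⟩
  rw [Finset.set_biUnion_singleton, mem_closedBall, ← ENNReal.ofReal_le_ofReal_iff (by positivity),
    ← edist_dist]
  exact (edist_le_ediam_of_mem hx.1 hz).trans hF

variable [MeasurableSpace X] {F : Set X} {ν : Measure X}

lemma exists_measure_closedBall_le_mul_rpow [ProperSpace X] {c t : ℝ} (hc : 0 ≤ c) (ht : 0 ≤ t)
    (hF : IsClosed F) (hν : ν Fᶜ = 0) (hd : 0 < ediam F)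
    (hup : ∀ x ∈ F, ∀ r : ℝ, 0 < r → ENNReal.ofReal r < ediam F →
      ν (closedBall x r) ≤ ENNReal.ofReal (c * r ^ t)) :
    ∃ C, c ≤ C ∧ ∀ x ∈ F, ∀ r : ℝ, 0 < r → ν (closedBall x r) ≤ ENNReal.ofReal (C * r ^ t) := by
  rcases eq_or_ne (ediam F) ∞ with hinf | hfin
  · exact ⟨c, le_rfl, fun x hx r hr => hup x hx r hr (hinf ▸ ENNReal.ofReal_lt_top)⟩
  set d := (ediam F).toReal
  have hd₀ : 0 < d := ENNReal.toReal_pos hd.ne' hfin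
  have hdF : ediam F = ENNReal.ofReal d := (ENNReal.ofReal_toReal hfin).symm
  have hlt : ∀ {r}, r < d → ENNReal.ofReal r < ediam F := fun hr => by
    rw [hdF]; exact (ENNReal.ofReal_lt_ofReal_iff hd₀).2 hr
  have hFc : IsCompact F :=
    Metric.isCompact_of_isClosed_isBounded hF (Metric.isBounded_iff_ediam_ne_top.2 hfin)
  have hνF : ν F ≠ ∞ := (hFc.measure_lt_top_of_nhdsWithin fun x hx =>
    ⟨closedBall x (d / 2), mem_nhdsWithin_of_mem_nhds (closedBall_mem_nhds x (by positivity)),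
      (hup x hx _ (by positivity) (hlt (by linarith))).trans_lt ENNReal.ofReal_lt_top⟩).ne
  set V := (ν F).toReal
  have hV : 0 ≤ V / d ^ t := by positivity
  refine ⟨c + V / d ^ t, le_add_of_nonneg_right hV, fun x hx r hr => ?_⟩
  by_cases hrd : ENNReal.ofReal r < ediam F
  · refine (hup x hx r hr hrd).trans (ENNReal.ofReal_le_ofReal ?_)
    nlinarith [mul_nonneg hV (Real.rpow_nonneg hr.le t)]
  have hdr : d ≤ r := by
    rwa [hdF, not_lt, ENNReal.ofReal_le_ofReal_iff hr.le] at hrd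
  calc ν (closedBall x r) ≤ ν F :=
        measure_mono_ae (ae_le_set.2 (measure_mono_null (fun y hy => hy.2) hν))
    _ = ENNReal.ofReal V := (ENNReal.ofReal_toReal hνF).symm
    _ ≤ ENNReal.ofReal ((c + V / d ^ t) * r ^ t) := by
      refine ENNReal.ofReal_le_ofReal ?_
      have hdt : d ^ t ≤ r ^ t := Real.rpow_le_rpow hd₀.le hdr ht
      have : V = V / d ^ t * d ^ t := by field_simp
      nlinarith [mul_le_mul_of_nonneg_left hdt hV, mul_nonneg hc (Real.rpow_nonneg hr.le t)]

lemma card_le_of_pairwise_lt_dist [OpensMeasurableSpace X] {c C t η R : ℝ} (hc : 0 < c) (hC : 0 ≤ C)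
    (hη : 0 < η) (hηR : η ≤ R) (hηF : ENNReal.ofReal η < ediam F)
    (hlow : ∀ x ∈ F, ∀ r : ℝ, 0 < r → ENNReal.ofReal r < ediam F →
      ENNReal.ofReal (c⁻¹ * r ^ t) ≤ ν (closedBall x r))
    (hup : ∀ x ∈ F, ∀ r : ℝ, 0 < r → ν (closedBall x r) ≤ ENNReal.ofReal (C * r ^ t))
    {y : X} {s : Finset X} (hsF : ↑s ⊆ F ∩ closedBall y R)
    (hs : (s : Set X).Pairwise fun p q => 2 * η < dist p q) :
    (s.card : ℝ) ≤ c * C * (3 * R / η) ^ t := by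
  have hR : 0 < R := hη.trans_le hηR
  rcases s.eq_empty_or_nonempty with rfl | ⟨p₀, hp₀⟩
  · simp only [Finset.card_empty, Nat.cast_zero]
    exact mul_nonneg (mul_nonneg hc.le hC) (by positivity)
  have hdisj : (s : Set X).PairwiseDisjoint fun p => closedBall p η := fun p hp q hq hpq =>
    closedBall_disjoint_closedBall (by linarith [hs hp hq hpq])
  have hsub : ⋃ p ∈ s, closedBall p η ⊆ closedBall p₀ (3 * R) := by
    refine iUnion₂_subset fun p hp w hw => ?_
    have hp' := mem_closedBall.1 (hsF hp).2
    have hp₀' := mem_closedBall.1 (hsF hp₀).2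
    rw [mem_closedBall] at hw ⊢
    linarith [dist_triangle4 w p y p₀, dist_comm p₀ y]
  have key : (s.card : ℝ≥0∞) * ENNReal.ofReal (c⁻¹ * η ^ t) ≤ ENNReal.ofReal (C * (3 * R) ^ t) :=
    calc (s.card : ℝ≥0∞) * ENNReal.ofReal (c⁻¹ * η ^ t)
        = ∑ _p ∈ s, ENNReal.ofReal (c⁻¹ * η ^ t) := by rw [Finset.sum_const, nsmul_eq_mul]
      _ ≤ ∑ p ∈ s, ν (closedBall p η) :=
        Finset.sum_le_sum fun p hp => hlow p (hsF hp).1 η hη hηF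
      _ = ν (⋃ p ∈ s, closedBall p η) :=
        (measure_biUnion_finset hdisj fun _ _ => measurableSet_closedBall).symm
      _ ≤ ν (closedBall p₀ (3 * R)) := measure_mono hsub
      _ ≤ ENNReal.ofReal (C * (3 * R) ^ t) := hup p₀ (hsF hp₀).1 _ (by linarith)
  rw [← ENNReal.ofReal_natCast, ← ENNReal.ofReal_mul (Nat.cast_nonneg _),
    ENNReal.ofReal_le_ofReal_iff (mul_nonneg hC (by positivity))] at key
  have hηt : 0 < η ^ t := Real.rpow_pos_of_pos hη t
  rw [Real.div_rpow (by linarith) hη.le]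
  calc (s.card : ℝ) = s.card * (c⁻¹ * η ^ t) * (c / η ^ t) := by field_simp
    _ ≤ C * (3 * R) ^ t * (c / η ^ t) := by gcongr
    _ = c * C * ((3 * R) ^ t / η ^ t) := by ring

lemma exists_hasCoveringBound_of_regular [OpensMeasurableSpace X] [ProperSpace X] {c t : ℝ}
    (hc : 1 ≤ c) (ht : 0 ≤ t) (hF : IsClosed F) (hν : ν Fᶜ = 0)
    (hreg : ∀ x ∈ F, ∀ r : ℝ, 0 < r → ENNReal.ofReal r < ediam F →
      ENNReal.ofReal (c⁻¹ * r ^ t) ≤ ν (closedBall x r) ∧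
      ν (closedBall x r) ≤ ENNReal.ofReal (c * r ^ t)) :
    ∃ K, 0 < K ∧ HasCoveringBound F K t := by
  by_cases hd : 0 < ediam F
  swap
  · exact ⟨1, one_pos, fun y δ R hδ hδR => exists_finset_cover_of_ediam_le le_rfl ht hδ hδR
      ((not_lt.1 hd).trans zero_le) y⟩
  obtain ⟨C, hcC, hup⟩ := exists_measure_closedBall_le_mul_rpow (by linarith) ht hF hν hd
    fun x hx r hr hrF => (hreg x hx r hr hrF).2
  have hK : 1 ≤ c * C * 15 ^ t :=
    one_le_mul_of_one_le_of_one_le (one_le_mul_of_one_le_of_one_le hc (hc.trans hcC))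
      (Real.one_le_rpow (by norm_num) ht)
  refine ⟨c * C * 15 ^ t, one_pos.trans_le hK, fun y δ R hδ hδR => ?_⟩
  by_cases hδF : ENNReal.ofReal (δ / 5) < ediam F
  · refine exists_finset_cover_of_forall_separated_card_le (by positivity) fun s hsS hsep => ?_
    have := card_le_of_pairwise_lt_dist (by linarith) (by linarith) (by positivity : 0 < δ / 5)
      (by linarith) hδF (fun x hx r hr hrF => (hreg x hx r hr hrF).1) hup hsS
      fun p hp q hq hpq => by linarith [hsep hp hq hpq]
    rwa [show 3 * R / (δ / 5) = 15 * (R / δ) by field_simp; ring,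
      Real.mul_rpow (by norm_num) (div_nonneg (by linarith) hδ.le), ← mul_assoc] at this
  · exact exists_finset_cover_of_ediam_le hK ht hδ hδR
      ((not_lt.1 hδF).trans (ENNReal.ofReal_le_ofReal (by linarith))) y

end Covering

section Density

variable {X : Type*} [PseudoMetricSpace X] [MeasurableSpace X] {μ : Measure X}

def massJumpSet (μ : Measure X) (T δ R : ℝ) : Set X :=
  {x | ENNReal.ofReal T * μ (closedBall x δ) < μ (closedBall x R)}

lemma setOf_subset_iUnion_massJumpSet {a s ρ₀ : ℝ} (ha₀ : 0 ≤ a) (ha₁ : a ≤ 1) (hs : 0 ≤ s)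
    (hρ₀ : ρ₀ ≤ 1) :
    {x | ∃ ρ r : ℝ, 0 < ρ ∧ ρ < ρ₀ ∧ ρ ^ a ≤ r ∧
      ENNReal.ofReal ((4 * r / ρ) ^ s) * μ (closedBall x ρ) < μ (closedBall x r)} ⊆
      ⋃ N : ℕ, ⋃ (_ : (2 : ℝ)⁻¹ ^ N < ρ₀), ⋃ L : ℕ, ⋃ (_ : (1 - a) * N ≤ L),
        massJumpSet μ (((2 : ℝ) ^ L) ^ s) (2⁻¹ ^ N) (2 ^ L * 2⁻¹ ^ N) := by
  rintro x ⟨ρ, r, hρ, hρρ₀, hρr, hx⟩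
  obtain ⟨N, L, hN, hNL, hL, hrL⟩ :=
    exists_dyadic_scales ha₀ ha₁ hρ (hρρ₀.trans_le hρ₀) hρr
  simp only [mem_iUnion]
  refine ⟨N, hN.trans hρρ₀, L, hNL, ?_⟩
  calc ENNReal.ofReal (((2 : ℝ) ^ L) ^ s) * μ (closedBall x (2⁻¹ ^ N))
      ≤ ENNReal.ofReal ((4 * r / ρ) ^ s) * μ (closedBall x ρ) := by gcongr
    _ < μ (closedBall x r) := hx
    _ ≤ μ (closedBall x (2 ^ L * 2⁻¹ ^ N)) := measure_mono (closedBall_subset_closedBall hrL)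

variable [OpensMeasurableSpace X]

lemma setLIntegral_inv_measure_closedBall_le_one (z : X) (δ : ℝ) :
    ∫⁻ x in closedBall z (δ / 2), (μ (closedBall x δ))⁻¹ ∂μ ≤ 1 := by
  calc ∫⁻ x in closedBall z (δ / 2), (μ (closedBall x δ))⁻¹ ∂μ
      ≤ ∫⁻ _ in closedBall z (δ / 2), (μ (closedBall z (δ / 2)))⁻¹ ∂μ := by
        refine setLIntegral_mono' measurableSet_closedBall fun x hx => ENNReal.inv_le_inv.2 ?_
        refine measure_mono fun w hw => ?_
        rw [mem_closedBall] at *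
        linarith [dist_triangle w z x, dist_comm x z]
    _ = (μ (closedBall z (δ / 2)))⁻¹ * μ (closedBall z (δ / 2)) := setLIntegral_const _ _
    _ ≤ 1 := ENNReal.inv_mul_le_one _

lemma setLIntegral_inv_measure_closedBall_le_card {S : Set X} {s : Finset X} {δ : ℝ}
    (hS : S ⊆ ⋃ z ∈ s, closedBall z (δ / 2)) :
    ∫⁻ x in S, (μ (closedBall x δ))⁻¹ ∂μ ≤ s.card := by
  calc ∫⁻ x in S, (μ (closedBall x δ))⁻¹ ∂μ
      ≤ ∫⁻ x in ⋃ z ∈ s, closedBall z (δ / 2), (μ (closedBall x δ))⁻¹ ∂μ := lintegral_mono_set hS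
    _ ≤ ∑ z ∈ s, ∫⁻ x in closedBall z (δ / 2), (μ (closedBall x δ))⁻¹ ∂μ := by
        clear hS
        induction s using Finset.induction_on with
        | empty => simp
        | insert z s hz ih =>
          rw [Finset.set_biUnion_insert, Finset.sum_insert hz]
          exact (lintegral_union_le _ _ _).trans (by gcongr)
    _ ≤ ∑ _z ∈ s, 1 := Finset.sum_le_sum fun z _ => setLIntegral_inv_measure_closedBall_le_one z δ
    _ = s.card := by simp

variable [SecondCountableTopology X]

lemma measurable_measure_closedBall [SFinite μ] (r : ℝ) :
    Measurable fun x => μ (closedBall x r) :=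
  measurable_measure_prodMk_left (ν := μ)
    (measurableSet_le (measurable_snd.dist measurable_fst) measurable_const :
      MeasurableSet {p : X × X | dist p.2 p.1 ≤ r})

lemma lintegral_measure_closedBall_div_le [SFinite μ] {E : Set X} (hE : ∀ᵐ x ∂μ, x ∈ E) {δ R : ℝ}
    {M : ℝ≥0∞} (hcov : ∀ y, ∃ s : Finset X, (s.card : ℝ≥0∞) ≤ M ∧
      E ∩ closedBall y R ⊆ ⋃ z ∈ s, closedBall z (δ / 2)) :
    ∫⁻ x, μ (closedBall x R) / μ (closedBall x δ) ∂μ ≤ M * μ univ := by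
  set f : X → ℝ≥0∞ := fun x => (μ (closedBall x δ))⁻¹
  have hf : Measurable f := (measurable_measure_closedBall δ).inv
  have hball : ∀ x, μ (closedBall x R) / μ (closedBall x δ) =
      ∫⁻ y, (closedBall y R).indicator f x ∂μ := fun x => by
    have hsymm : (fun y => (closedBall y R).indicator f x) =
        (closedBall x R).indicator fun _ => f x := by
      ext y; simp only [indicator_apply, mem_closedBall_comm]
    rw [hsymm, lintegral_indicator_const measurableSet_closedBall, div_eq_mul_inv, mul_comm]
  have hmeas : Measurable (Function.uncurry fun x y => (closedBall y R).indicator f x) :=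
    (hf.comp measurable_fst).indicator
      (measurableSet_le (measurable_fst.dist measurable_snd) measurable_const :
        MeasurableSet {p : X × X | dist p.1 p.2 ≤ R})
  calc ∫⁻ x, μ (closedBall x R) / μ (closedBall x δ) ∂μ
      = ∫⁻ x in E, ∫⁻ y, (closedBall y R).indicator f x ∂μ ∂μ := by
        rw [Measure.restrict_eq_self_of_ae_mem hE]; simp_rw [hball]
    _ = ∫⁻ y, ∫⁻ x in E ∩ closedBall y R, f x ∂μ ∂μ := by
        rw [lintegral_lintegral_swap hmeas.aemeasurable]
        simp_rw [lintegral_indicator measurableSet_closedBall,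
          Measure.restrict_restrict measurableSet_closedBall, inter_comm]
    _ ≤ ∫⁻ _, M ∂μ := lintegral_mono fun y => by
        obtain ⟨s, hs, hcover⟩ := hcov y
        exact (setLIntegral_inv_measure_closedBall_le_card hcover).trans hs
    _ = M * μ univ := lintegral_const M

lemma measure_setOf_mul_measure_closedBall_lt_le [SFinite μ] {E : Set X} (hE : ∀ᵐ x ∂μ, x ∈ E)
    {δ R : ℝ} {M : ℝ≥0∞} (hcov : ∀ y, ∃ s : Finset X, (s.card : ℝ≥0∞) ≤ M ∧
      E ∩ closedBall y R ⊆ ⋃ z ∈ s, closedBall z (δ / 2)) {T : ℝ≥0∞} (hT₀ : T ≠ 0)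
    (hT : T ≠ ∞) :
    μ {x | T * μ (closedBall x δ) < μ (closedBall x R)} ≤ M * μ univ / T := by
  have hsub : {x | T * μ (closedBall x δ) < μ (closedBall x R)} ⊆
      {x | T ≤ μ (closedBall x R) / μ (closedBall x δ)} := fun x hx => by
    have hx : T * μ (closedBall x δ) < μ (closedBall x R) := hx
    have hR : μ (closedBall x R) ≠ 0 := (zero_le.trans_lt hx).ne'
    have hδ : μ (closedBall x δ) ≠ ∞ := fun h => by simp [h, ENNReal.mul_top hT₀] at hx
    exact (ENNReal.le_div_iff_mul_le (Or.inr hR) (Or.inl hδ)).2 hx.le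
  calc μ {x | T * μ (closedBall x δ) < μ (closedBall x R)}
      ≤ μ {x | T ≤ μ (closedBall x R) / μ (closedBall x δ)} := measure_mono hsub
    _ ≤ (∫⁻ x, μ (closedBall x R) / μ (closedBall x δ) ∂μ) / T :=
        meas_ge_le_lintegral_div ((measurable_measure_closedBall R).div
          (measurable_measure_closedBall δ)).aemeasurable hT₀ hT
    _ ≤ M * μ univ / T := by gcongr; exact lintegral_measure_closedBall_div_le hE hcov

variable [IsProbabilityMeasure μ] {F : Set X} {K t : ℝ}

lemma measure_massJumpSet_le (hμF : ∀ᵐ x ∂μ, x ∈ F) (hF : HasCoveringBound F K t) {κ δ : ℝ}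
    (hκ : 1 ≤ κ) (hδ : 0 < δ) (s : ℝ) :
    μ (massJumpSet μ (κ ^ s) δ (κ * δ)) ≤ ENNReal.ofReal (K * κ ^ t / κ ^ s) := by
  have hκ₀ : 0 < κ := one_pos.trans_le hκ
  have hcov : ∀ y, ∃ u : Finset X, (u.card : ℝ≥0∞) ≤ ENNReal.ofReal (K * κ ^ t) ∧
      F ∩ closedBall y (κ * δ) ⊆ ⋃ z ∈ u, closedBall z (δ / 2) := fun y => by
    obtain ⟨u, hu, hcover⟩ := hF y δ (κ * δ) hδ (le_mul_of_one_le_left hδ.le hκ)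
    rw [mul_div_cancel_right₀ _ hδ.ne'] at hu
    exact ⟨u, by simpa using ENNReal.ofReal_le_ofReal hu, hcover⟩
  refine (measure_setOf_mul_measure_closedBall_lt_le hμF hcov
    (ENNReal.ofReal_pos.2 (Real.rpow_pos_of_pos hκ₀ s)).ne' ENNReal.ofReal_ne_top).trans_eq ?_
  rw [measure_univ, mul_one, ENNReal.ofReal_div_of_pos (Real.rpow_pos_of_pos hκ₀ s)]

lemma measure_massJumpSet_two_pow_le (hμF : ∀ᵐ x ∂μ, x ∈ F) (hF : HasCoveringBound F K t)
    (hK : 0 ≤ K) (ε : ℝ) (N L : ℕ) :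
    μ (massJumpSet μ (((2 : ℝ) ^ L) ^ (t * (1 + ε))) (2⁻¹ ^ N) (2 ^ L * 2⁻¹ ^ N)) ≤
      ENNReal.ofReal K * ENNReal.ofReal ((2 : ℝ)⁻¹ ^ (t * ε)) ^ L := by
  refine (measure_massJumpSet_le hμF hF (one_le_pow₀ one_le_two) (by positivity) _).trans_eq ?_
  rw [← ENNReal.ofReal_pow (by positivity), ← ENNReal.ofReal_mul hK, mul_div_assoc,
    ← Real.rpow_sub (by positivity), show t - t * (1 + ε) = -(t * ε) by ring,
    Real.rpow_neg (by positivity), ← Real.inv_rpow (by positivity), ← inv_pow,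
    ← Real.rpow_pow_comm (by norm_num)]

lemma tsum_measure_massJumpSet_le (hμF : ∀ᵐ x ∂μ, x ∈ F) (hF : HasCoveringBound F K t)
    (hK : 0 ≤ K) {ε : ℝ} (htε : 0 < t * ε) (a : ℝ) (N : ℕ) :
    ∑' L : ℕ, (if (1 - a) * N ≤ L then
        μ (massJumpSet μ (((2 : ℝ) ^ L) ^ (t * (1 + ε))) (2⁻¹ ^ N) (2 ^ L * 2⁻¹ ^ N)) else 0) ≤
      ENNReal.ofReal K * (1 - ENNReal.ofReal ((2 : ℝ)⁻¹ ^ (t * ε)))⁻¹ *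
        ENNReal.ofReal ((2 : ℝ)⁻¹ ^ (t * ε * (1 - a))) ^ N := by
  set q : ℝ := 2⁻¹ ^ (t * ε)
  calc _ ≤ ∑' L : ℕ, ENNReal.ofReal K * (if (1 - a) * N ≤ L then ENNReal.ofReal q ^ L else 0) :=
        ENNReal.tsum_le_tsum fun L => by
          split_ifs
          · exact measure_massJumpSet_two_pow_le hμF hF hK ε N L
          · simp
    _ ≤ ENNReal.ofReal K * (ENNReal.ofReal (q ^ ((1 - a) * N)) * (1 - ENNReal.ofReal q)⁻¹) := by
        rw [ENNReal.tsum_mul_left]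
        gcongr
        exact tsum_ite_le_ofReal_rpow (by positivity)
          (Real.rpow_le_one (by norm_num) (by norm_num) htε.le)
    _ = _ := by
        rw [← ENNReal.ofReal_pow (by positivity), ← Real.rpow_natCast,
          ← Real.rpow_mul (by norm_num), ← Real.rpow_mul (by norm_num), mul_assoc (t * ε)]
        ring

theorem exists_measure_setOf_lt_measure_closedBall_le (hμF : ∀ᵐ x ∂μ, x ∈ F) {ε a : ℝ}
    (hK : 0 < K) (ht : 0 < t) (hε : 0 < ε) (ha : a ∈ Ioo (0 : ℝ) 1)
    (hF : HasCoveringBound F K t) :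
    ∃ c₀ > (0 : ℝ), ∀ ρ₀ : ℝ, 0 < ρ₀ → ρ₀ ≤ 1 →
      μ {x | ∃ ρ r : ℝ, 0 < ρ ∧ ρ < ρ₀ ∧ ρ ^ a ≤ r ∧
          ENNReal.ofReal ((4 * r / ρ) ^ (t * (1 + ε))) * μ (closedBall x ρ)
            < μ (closedBall x r)}
        ≤ ENNReal.ofReal (c₀ * ρ₀ ^ (t * ε * (1 - a))) := by
  have htε : 0 < t * ε := mul_pos ht hε
  set θ := t * ε * (1 - a)
  have hθ : 0 < θ := mul_pos htε (sub_pos.2 ha.2)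
  have hinv : ∀ {u : ℝ}, 0 < u → (1 - ENNReal.ofReal ((2 : ℝ)⁻¹ ^ u))⁻¹ ≠ ∞ := fun hu =>
    ENNReal.inv_ne_top.2 (tsub_pos_of_lt (ENNReal.ofReal_lt_one.2
      (Real.rpow_lt_one (by norm_num) (by norm_num) hu))).ne'
  set p := ENNReal.ofReal ((2 : ℝ)⁻¹ ^ θ)
  set C := ENNReal.ofReal K * (1 - ENNReal.ofReal ((2 : ℝ)⁻¹ ^ (t * ε)))⁻¹
  have hP : C * (1 - p)⁻¹ ≠ ∞ :=
    ENNReal.mul_ne_top (ENNReal.mul_ne_top ENNReal.ofReal_ne_top (hinv htε)) (hinv hθ)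
  have hP₀ : C * (1 - p)⁻¹ ≠ 0 := by simp [C, hK]
  refine ⟨(C * (1 - p)⁻¹).toReal, ENNReal.toReal_pos hP₀ hP, fun ρ₀ hρ₀ hρ₀₁ => ?_⟩
  calc _ ≤ μ (⋃ N : ℕ, ⋃ (_ : (2 : ℝ)⁻¹ ^ N < ρ₀), ⋃ L : ℕ, ⋃ (_ : (1 - a) * N ≤ L),
          massJumpSet μ (((2 : ℝ) ^ L) ^ (t * (1 + ε))) (2⁻¹ ^ N) (2 ^ L * 2⁻¹ ^ N)) :=
        measure_mono (setOf_subset_iUnion_massJumpSet ha.1.le ha.2.le (by positivity) hρ₀₁)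
    _ ≤ ∑' N : ℕ, C * (if (2 : ℝ)⁻¹ ^ N < ρ₀ then p ^ N else 0) := by
        refine (measure_iUnion_ite_le μ _ _).trans (ENNReal.tsum_le_tsum fun N => ?_)
        split_ifs
        · exact (measure_iUnion_ite_le μ _ _).trans
            (tsum_measure_massJumpSet_le hμF hF hK.le htε a N)
        · simp
    _ ≤ C * (ENNReal.ofReal (ρ₀ ^ θ) * (1 - p)⁻¹) := by
        rw [ENNReal.tsum_mul_left]
        gcongr
        exact tsum_ite_inv_two_pow_lt_le hθ.le hρ₀
    _ = ENNReal.ofReal ((C * (1 - p)⁻¹).toReal * ρ₀ ^ θ) := by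
        rw [ENNReal.ofReal_mul ENNReal.toReal_nonneg, ENNReal.ofReal_toReal hP]
        ring

end Density

theorem statement1_general (n : ℕ) (μ : Measure (EuclideanSpace ℝ (Fin n))) [IsProbabilityMeasure μ]
    (a ε t : ℝ) (ha : a ∈ Set.Ioo (0 : ℝ) 1) (hε : 0 < ε)
    (ht : 0 < t) (F : Set (EuclideanSpace ℝ (Fin n))) (ν : Measure (EuclideanSpace ℝ (Fin n)))
    (c : ℝ) (hF : IsClosed F) (hEF : msupp μ ⊆ F) (hν : ν Fᶜ = 0) (hc : 1 ≤ c)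
    (hreg : ∀ x ∈ F, ∀ r : ℝ, 0 < r → ENNReal.ofReal r < EMetric.diam F →
      ENNReal.ofReal (c⁻¹ * r ^ t) ≤ ν (Metric.closedBall x r) ∧
      ν (Metric.closedBall x r) ≤ ENNReal.ofReal (c * r ^ t)) :
    ∃ c₀ > (0 : ℝ), ∀ ρ₀ : ℝ, 0 < ρ₀ → ρ₀ ≤ 1 / 2 →
      μ {x | ∃ ρ r : ℝ, 0 < ρ ∧ ρ < ρ₀ ∧ ρ ^ a ≤ r ∧ r ≤ 1 ∧
          ENNReal.ofReal ((4 * r / ρ) ^ (t * (1 + ε))) * μ (Metric.closedBall x ρ)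
            < μ (Metric.closedBall x r)}
        ≤ ENNReal.ofReal (c₀ * ρ₀ ^ (t * ε * (1 - a))) := by
  have hμF : ∀ᵐ x ∂μ, x ∈ F := ae_iff.2 <| measure_mono_null (compl_subset_compl.2 hEF)
    (msupp_eq_support μ ▸ Measure.measure_compl_support)
  obtain ⟨K, hK, hcov⟩ := exists_hasCoveringBound_of_regular hc ht.le hF hν hreg
  obtain ⟨c₀, hc₀, hbound⟩ := exists_measure_setOf_lt_measure_closedBall_le hμF hK ht hε ha hcov
  refine ⟨c₀, hc₀, fun ρ₀ hρ₀ hρ₀_le => (measure_mono ?_).trans (hbound ρ₀ hρ₀ (by linarith))⟩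
  rintro x ⟨ρ, r, hρ, hρρ₀, hρr, -, hx⟩
  exact ⟨ρ, r, hρ, hρρ₀, hρr, hx⟩

/-- If `μ` is a Borel probability measure with compact support `E` contained
in a `t`-regular set `F` (with regularity measure `ν` and constant `c`), then there is a
constant `c₀ > 0` such that for all `0 < ρ₀ ≤ 1/2`, the `μ`-measure of the set of points `x`
admitting radii `0 < ρ < ρ₀` and `ρ^a ≤ r ≤ 1` with
`μ(B(x,r)) > (4r/ρ)^(t(1+ε)) μ(B(x,ρ))` is at most `c₀ ρ₀^(tε(1-a))`. -/
theorem statement1 (n : ℕ) (μ : Measure (EuclideanSpace ℝ (Fin n))) [IsProbabilityMeasure μ]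
    (hE : IsCompact (msupp μ)) (a ε t : ℝ) (ha : a ∈ Set.Ioo (0 : ℝ) 1) (hε : 0 < ε)
    (ht : 0 < t) (F : Set (EuclideanSpace ℝ (Fin n))) (ν : Measure (EuclideanSpace ℝ (Fin n)))
    (c : ℝ) (hF : IsClosed F) (hEF : msupp μ ⊆ F) (hν : ν Fᶜ = 0) (hc : 1 ≤ c)
    (hreg : ∀ x ∈ F, ∀ r : ℝ, 0 < r → ENNReal.ofReal r < EMetric.diam F →
      ENNReal.ofReal (c⁻¹ * r ^ t) ≤ ν (Metric.closedBall x r) ∧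
      ν (Metric.closedBall x r) ≤ ENNReal.ofReal (c * r ^ t)) :
    ∃ c₀ > (0 : ℝ), ∀ ρ₀ : ℝ, 0 < ρ₀ → ρ₀ ≤ 1 / 2 →
      μ {x | ∃ ρ r : ℝ, 0 < ρ ∧ ρ < ρ₀ ∧ ρ ^ a ≤ r ∧ r ≤ 1 ∧
          ENNReal.ofReal ((4 * r / ρ) ^ (t * (1 + ε))) * μ (Metric.closedBall x ρ)
            < μ (Metric.closedBall x r)}
        ≤ ENNReal.ofReal (c₀ * ρ₀ ^ (t * ε * (1 - a))) :=
  statement1_general n μ a ε t ha hε ht F ν c hF hEF hν hc hreg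
end
end

section
/- Let μ be a Borel probability measure on ℝⁿ with compact support and let θ ∈ (0,1]. Then the function f(h) = dim_{P,θ}^h μ satisfies the Lipschitz bound f(s) − f(t) ≤ s − t for all 0 < t ≤ s; in particular f is Lipschitz continuous on (0,∞). -/
open MeasureTheory Metric Filter Set Topology
open scoped ENNReal

noncomputable section
open scoped Classical

/-! Writing `d = ‖x - y‖`, the last term of the kernel of `Ftheta t s θ` is
`(r ^ θ / d) ^ (s - t) * r ^ t * d ^ (-t)`, so for fixed `t` the kernel decreases in `s`; hence
the admissible exponents for `s` include those for any smaller `s`, and the profile is monotone.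
Conversely, lowering both `t` and `s` by `δ = s - t` multiplies the kernel by at most
`(D / r) ^ δ`, where `D` bounds the diameter of the support. Normalising by `r ^ (t - δ)` instead
of `r ^ t` absorbs the factor `r ^ (-δ)`, so an admissible `t` for `s` yields an admissible `t - δ`
for `s - δ`, i.e. `f s ≤ f (s - δ) + δ`. -/

-- The integrand of `Ftheta` off the diagonal, as a function of `d = ‖x - y‖`.
def thetaKernel (t s θ r d : ℝ) : ℝ :=
  min (min 1 (r ^ t * d ^ (-t))) (r ^ (θ * (s - t) + t) * d ^ (-s))

lemma thetaKernel_anti_right {u t s θ r d : ℝ} (hut : u ≤ t) (hts : t ≤ s) (hr : 0 < r)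
    (hd : 0 < d) : thetaKernel u s θ r d ≤ thetaKernel u t θ r d := by
  have tail_eq : ∀ v, r ^ (θ * (v - u) + u) * d ^ (-v) =
      (r ^ θ / d) ^ (v - u) * (r ^ u * d ^ (-u)) := fun v => by
    rw [Real.div_rpow (by positivity) hd.le, ← Real.rpow_mul hr.le,
      show -v = -(v - u) + -u by ring, Real.rpow_add hd, Real.rpow_neg hd.le (v - u),
      Real.rpow_add hr]
    ring
  unfold thetaKernel
  rw [tail_eq s, tail_eq t]
  have hP : 0 < r ^ u * d ^ (-u) := by positivity
  rcases le_or_gt (r ^ θ / d) 1 with hx | hx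
  · refine min_le_min le_rfl (mul_le_mul_of_nonneg_right ?_ hP.le)
    exact Real.rpow_le_rpow_of_exponent_ge (by positivity) hx (by linarith)
  · refine le_min (min_le_left _ _) ((min_le_left _ _).trans ((min_le_right _ _).trans ?_))
    exact le_mul_of_one_le_left hP.le (Real.one_le_rpow hx.le (by linarith))

lemma rpow_sub_mul_rpow_neg_sub_le {r d D δ : ℝ} (c b : ℝ) (hr : 0 < r) (hd : 0 < d)
    (hdD : d ≤ D) (hδ : 0 ≤ δ) :
    r ^ (c - δ) * d ^ (-(b - δ)) ≤ (D / r) ^ δ * (r ^ c * d ^ (-b)) := by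
  have : r ^ (c - δ) * d ^ (-(b - δ)) = (d / r) ^ δ * (r ^ c * d ^ (-b)) := by
    rw [Real.div_rpow hd.le hr.le, Real.rpow_sub hr, show -(b - δ) = -b + δ by ring,
      Real.rpow_add hd]
    field_simp
  rw [this]
  gcongr

lemma thetaKernel_sub_le {u t s θ r d D : ℝ} (hts : t ≤ s) (hr : 0 < r) (hrD : r ≤ D)
    (hd : 0 < d) (hdD : d ≤ D) :
    thetaKernel (u - (s - t)) t θ r d ≤ (D / r) ^ (s - t) * thetaKernel u s θ r d := by
  have hδ : 0 ≤ s - t := sub_nonneg.2 hts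
  have hK : 1 ≤ (D / r) ^ (s - t) :=
    Real.one_le_rpow ((one_le_div hr).2 hrD) hδ
  unfold thetaKernel
  rw [mul_min_of_nonneg _ _ (by positivity), mul_min_of_nonneg _ _ (by positivity)]
  refine min_le_min (min_le_min (by simpa using hK) ?_) ?_
  · exact rpow_sub_mul_rpow_neg_sub_le u u hr hd hdD hδ
  · rw [show θ * (t - (u - (s - t))) + (u - (s - t)) = θ * (s - u) + u - (s - t) by ring,
      show -t = -(s - (s - t)) by ring]
    exact rpow_sub_mul_rpow_neg_sub_le _ s hr hd hdD hδ

lemma liminf_eq_zero_of_le_const_mul {α : Type*} {l : Filter α} [l.NeBot] {f g : α → ℝ≥0∞}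
    {c : ℝ≥0∞} (hc : c ≠ ∞) (hfg : ∀ᶠ a in l, f a ≤ c * g a) (hg : liminf g l = 0) :
    liminf f l = 0 := by
  refine le_antisymm ?_ bot_le
  calc liminf f l ≤ liminf (fun a => c * g a) l := liminf_le_liminf hfg
    _ = c * liminf g l :=
      ((monotone_id.const_mul' c).map_liminf_of_continuousAt g
        (ENNReal.continuous_const_mul hc).continuousAt).symm
    _ = 0 := by rw [hg, mul_zero]

def dimPthetaSet {n : ℕ} (s θ : ℝ) (μ : Measure (EuclideanSpace ℝ (Fin n))) : Set ℝ :=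
  {t | t ∈ Icc 0 s ∧ ∀ᵐ x ∂μ,
    liminf (fun r : ℝ => Ftheta t s θ μ x r / ENNReal.ofReal (r ^ t)) (𝓝[>] 0) = 0}

section Profile

variable {n : ℕ} {μ : Measure (EuclideanSpace ℝ (Fin n))} {x : EuclideanSpace ℝ (Fin n)}
  {θ : ℝ}

lemma Ftheta_le_const_mul {t s t' s' r K : ℝ} (hK : 1 ≤ K)
    (h : ∀ᵐ y ∂μ, y ≠ x → thetaKernel t s θ r ‖x - y‖ ≤ K * thetaKernel t' s' θ r ‖x - y‖) :
    Ftheta t s θ μ x r ≤ ENNReal.ofReal K * Ftheta t' s' θ μ x r := by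
  rw [Ftheta, Ftheta, ← lintegral_const_mul' _ _ ENNReal.ofReal_ne_top]
  refine lintegral_mono_ae ?_
  filter_upwards [h] with y hy
  rw [← ENNReal.ofReal_mul (by linarith)]
  refine ENNReal.ofReal_le_ofReal ?_
  by_cases hxy : y = x
  · simpa [hxy] using hK
  · simpa only [hxy, if_false, thetaKernel] using hy hxy

lemma Ftheta_anti_right {u t s r : ℝ} (hut : u ≤ t) (hts : t ≤ s) (hr : 0 < r) :
    Ftheta u s θ μ x r ≤ Ftheta u t θ μ x r := by
  simpa using Ftheta_le_const_mul (μ := μ) (x := x) (θ := θ) le_rfl <| ae_of_all _ fun y hxy =>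
    by simpa using thetaKernel_anti_right hut hts hr (norm_pos_iff.2 (sub_ne_zero.2 hxy.symm))

lemma Ftheta_sub_div_le {u t s r D : ℝ} (hD : ∀ᵐ y ∂μ, ‖x - y‖ ≤ D) (hts : t ≤ s) (hr : 0 < r)
    (hrD : r ≤ D) :
    Ftheta (u - (s - t)) t θ μ x r / ENNReal.ofReal (r ^ (u - (s - t)))
      ≤ ENNReal.ofReal (D ^ (s - t)) * (Ftheta u s θ μ x r / ENNReal.ofReal (r ^ u)) := by
  have hD0 : 0 < D := hr.trans_le hrD
  have hK : 1 ≤ (D / r) ^ (s - t) :=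
    Real.one_le_rpow ((one_le_div hr).2 hrD) (sub_nonneg.2 hts)
  have hF := Ftheta_le_const_mul (θ := θ) hK <| hD.mono fun y hy hxy =>
    thetaKernel_sub_le (u := u) hts hr hrD (norm_pos_iff.2 (sub_ne_zero.2 hxy.symm)) hy
  have hscale : ENNReal.ofReal ((D / r) ^ (s - t)) / ENNReal.ofReal (r ^ (u - (s - t)))
      = ENNReal.ofReal (D ^ (s - t)) / ENNReal.ofReal (r ^ u) := by
    rw [← ENNReal.ofReal_div_of_pos (by positivity), ← ENNReal.ofReal_div_of_pos (by positivity),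
      Real.div_rpow hD0.le hr.le, Real.rpow_sub hr]
    congr 1
    field_simp
    rw [← Real.rpow_add hr, ← Real.rpow_add hr]
    ring_nf
  calc _ ≤ ENNReal.ofReal ((D / r) ^ (s - t)) * Ftheta u s θ μ x r
        / ENNReal.ofReal (r ^ (u - (s - t))) := ENNReal.div_le_div_right hF _
    _ = _ := by
      rw [mul_comm, mul_div_assoc, hscale, ← mul_div_assoc, mul_comm, mul_div_assoc]

lemma ae_mem_msupp : ∀ᵐ x ∂μ, x ∈ msupp μ := by
  rw [ae_iff]
  refine measure_null_of_locally_null _ fun x hx => ?_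
  obtain ⟨r, hr, hμ⟩ : ∃ r, 0 < r ∧ μ (ball x r) = 0 := by simpa [msupp] using hx
  exact ⟨ball x r, mem_nhdsWithin_of_mem_nhds (ball_mem_nhds x hr), by simpa using hμ⟩

lemma exists_ae_ae_norm_sub_le (hμ : Bornology.IsBounded (msupp μ)) :
    ∃ D, 0 < D ∧ ∀ᵐ x ∂μ, ∀ᵐ y ∂μ, ‖x - y‖ ≤ D := by
  obtain ⟨C, hC⟩ := isBounded_iff.1 hμ
  refine ⟨max C 1, by positivity, ?_⟩
  filter_upwards [ae_mem_msupp] with x hx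
  filter_upwards [ae_mem_msupp] with y hy
  exact (dist_eq_norm x y ▸ hC hx hy).trans (le_max_left C 1)

lemma le_dimPtheta {u s : ℝ} (hu : u ∈ dimPthetaSet s θ μ) : u ≤ dimPtheta s θ μ :=
  le_csSup (bddAbove_Icc.mono fun _ hv => hv.1) hu

lemma dimPtheta_nonneg (s : ℝ) : 0 ≤ dimPtheta s θ μ :=
  Real.sSup_nonneg fun _ hu => hu.1.1

lemma dimPthetaSet_mono {t s : ℝ} (hts : t ≤ s) : dimPthetaSet t θ μ ⊆ dimPthetaSet s θ μ := by
  rintro u ⟨⟨hu0, hut⟩, hu⟩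
  refine ⟨⟨hu0, hut.trans hts⟩, hu.mono fun x hx => ?_⟩
  refine liminf_eq_zero_of_le_const_mul ENNReal.one_ne_top ?_ hx
  filter_upwards [self_mem_nhdsWithin] with r hr
  rw [one_mul]
  exact ENNReal.div_le_div_right (Ftheta_anti_right hut hts hr) _

lemma dimPtheta_mono : Monotone fun s => dimPtheta s θ μ := fun _ s hts =>
  Real.sSup_le (fun _ hu => le_dimPtheta (dimPthetaSet_mono hts hu)) (dimPtheta_nonneg s)

lemma sub_mem_dimPthetaSet (hμ : Bornology.IsBounded (msupp μ)) {u t s : ℝ} (hts : t ≤ s)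
    (hu : u ∈ dimPthetaSet s θ μ) (hsu : s - t ≤ u) : u - (s - t) ∈ dimPthetaSet t θ μ := by
  obtain ⟨D, hD0, hD⟩ := exists_ae_ae_norm_sub_le hμ
  refine ⟨⟨sub_nonneg.2 hsu, by linarith [hu.1.2]⟩, ?_⟩
  filter_upwards [hu.2, hD] with x hx hxD
  refine liminf_eq_zero_of_le_const_mul (ENNReal.ofReal_ne_top (r := D ^ (s - t))) ?_ hx
  filter_upwards [Ioc_mem_nhdsGT hD0] with r hr
  exact Ftheta_sub_div_le hxD hts hr.1 hr.2

lemma dimPtheta_le_add (hμ : Bornology.IsBounded (msupp μ)) {t s : ℝ} (hts : t ≤ s) :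
    dimPtheta s θ μ ≤ dimPtheta t θ μ + (s - t) := by
  refine Real.sSup_le (fun u hu => ?_) (by linarith [dimPtheta_nonneg (θ := θ) (μ := μ) t])
  rcases le_total u (s - t) with hus | hsu
  · linarith [dimPtheta_nonneg (θ := θ) (μ := μ) t]
  · linarith [le_dimPtheta (sub_mem_dimPthetaSet hμ hts hu hsu)]

lemma lipschitzWith_one_dimPtheta (hμ : Bornology.IsBounded (msupp μ)) :
    LipschitzWith 1 fun s => dimPtheta s θ μ := by
  refine LipschitzWith.of_le_add fun s t => ?_
  rcases le_total s t with hst | hts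
  · linarith [dimPtheta_mono (θ := θ) (μ := μ) hst, dist_nonneg (x := s) (y := t)]
  · rw [Real.dist_eq, abs_of_nonneg (sub_nonneg.2 hts)]
    exact dimPtheta_le_add hμ hts

end Profile

theorem statement5_general (n : ℕ) (μ : Measure (EuclideanSpace ℝ (Fin n)))
    (hE : IsCompact (msupp μ)) (θ : ℝ) :
    (∀ t s : ℝ, 0 < t → t ≤ s → dimPtheta s θ μ - dimPtheta t θ μ ≤ s - t) ∧
    LipschitzOnWith 1 (fun h : ℝ => dimPtheta h θ μ) (Set.Ioi 0) :=
  ⟨fun _ _ _ hts => sub_le_iff_le_add'.2 (dimPtheta_le_add hE.isBounded hts),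
    (lipschitzWith_one_dimPtheta hE.isBounded).lipschitzOnWith⟩

/-- For a Borel probability measure `μ` with compact support and `θ ∈ (0,1]`,
the function `f(h) = dim_{P,θ}^h μ` satisfies `f(s) − f(t) ≤ s − t` for all `0 < t ≤ s`;
in particular it is Lipschitz continuous on `(0,∞)`. -/
theorem statement5 (n : ℕ) (μ : Measure (EuclideanSpace ℝ (Fin n))) [IsProbabilityMeasure μ]
    (hE : IsCompact (msupp μ)) (θ : ℝ) (hθ : θ ∈ Set.Ioc (0 : ℝ) 1) :
    (∀ t s : ℝ, 0 < t → t ≤ s → dimPtheta s θ μ - dimPtheta t θ μ ≤ s - t) ∧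
    LipschitzOnWith 1 (fun h : ℝ => dimPtheta h θ μ) (Set.Ioi 0) :=
  statement5_general n μ hE θ
end
end

section
/- Let μ be a finite Borel measure on ℝⁿ, let 1 ≤ m ≤ n be an integer, let θ ∈ (0,1] and t ∈ [0,m]. Then for every x ∈ ℝⁿ and every r ∈ (0,1], F_m^μ(x,r) ≤ F_{t,m,θ}^μ(x,r) ≤ F_{t,n,θ}^μ(x,r) + μ(ℝⁿ) r^(t(1−θ)). -/
open MeasureTheory Metric Filter Set Topology
open scoped ENNReal

noncomputable section
open scoped Classical

lemma rid (r d t s θ : ℝ) (hr : 0 < r) (hd : 0 < d) :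
    r ^ (θ*(s-t)+t) * d ^ (-s) = r ^ (t*(1-θ)) * (r ^ θ / d) ^ s := by
  rw [Real.div_rpow (by positivity) hd.le, ← Real.rpow_mul hr.le,
    Real.rpow_neg hd.le, div_eq_mul_inv, ← mul_assoc, ← Real.rpow_add hr]
  ring_nf

lemma key1 (r d t m θ : ℝ) (hr : 0 < r) (hr1 : r ≤ 1) (hd : 0 < d)
    (ht : 0 ≤ t) (htm : t ≤ m) (hθ1 : θ ≤ 1) :
    min 1 (r^m * d^(-m)) ≤ min (min 1 (r^t * d^(-t))) (r^(θ*(m-t)+t) * d^(-m)) := by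
  refine le_min (le_min (min_le_left _ _) ?_) ?_
  · rcases le_total r d with h | h
    · refine (min_le_right _ _).trans ?_
      rw [Real.rpow_neg hd.le, Real.rpow_neg hd.le, ← div_eq_mul_inv, ← div_eq_mul_inv,
        ← Real.div_rpow hr.le hd.le, ← Real.div_rpow hr.le hd.le]
      exact Real.rpow_le_rpow_of_exponent_ge (by positivity) ((div_le_one hd).mpr h) htm
    · refine (min_le_left _ _).trans ?_
      rw [Real.rpow_neg hd.le, ← div_eq_mul_inv, ← Real.div_rpow hr.le hd.le]
      exact Real.one_le_rpow ((le_div_iff₀ hd).mpr (by linarith)) ht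
  · refine (min_le_right _ _).trans ?_
    have : r ^ m ≤ r ^ (θ*(m-t)+t) :=
      Real.rpow_le_rpow_of_exponent_ge hr hr1 (by nlinarith)
    exact mul_le_mul_of_nonneg_right this (Real.rpow_nonneg hd.le _)

lemma key2 (r d t m n θ : ℝ) (hr : 0 < r) (hd : 0 < d)
    (ht : 0 ≤ t) (htm : t ≤ m) (hmn : m ≤ n) (hθ1 : θ ≤ 1) :
    min (min 1 (r^t * d^(-t))) (r^(θ*(m-t)+t) * d^(-m))
      ≤ min (min 1 (r^t * d^(-t))) (r^(θ*(n-t)+t) * d^(-n)) + r^(t*(1-θ)) := by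
  rcases le_total (r ^ θ) d with h | h
  · have h1 : r^(θ*(m-t)+t) * d^(-m) ≤ r^(t*(1-θ)) := by
      rw [rid r d t m θ hr hd]
      have h2 : (r ^ θ / d) ^ m ≤ 1 :=
        Real.rpow_le_one (by positivity) ((div_le_one hd).mpr h) (by linarith)
      nlinarith [Real.rpow_nonneg hr.le (t*(1-θ))]
    have h0 : 0 ≤ min (min 1 (r^t * d^(-t))) (r^(θ*(n-t)+t) * d^(-n)) :=
      le_min (le_min zero_le_one (by positivity)) (by positivity)
    calc _ ≤ r^(t*(1-θ)) := (min_le_right _ _).trans h1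
    _ ≤ _ := le_add_of_nonneg_left h0
  · have h1 : r^(θ*(m-t)+t) * d^(-m) ≤ r^(θ*(n-t)+t) * d^(-n) := by
      rw [rid r d t m θ hr hd, rid r d t n θ hr hd]
      refine mul_le_mul_of_nonneg_left ?_ (by positivity)
      exact Real.rpow_le_rpow_of_exponent_le ((one_le_div hd).mpr h) hmn
    refine le_add_of_le_of_nonneg (min_le_min le_rfl h1) (by positivity)

/-- For a finite Borel measure `μ` on `ℝⁿ`, an integer `1 ≤ m ≤ n`,
`θ ∈ (0,1]` and `t ∈ [0,m]`: for every `x` and `r ∈ (0,1]`,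
`F_m^μ(x,r) ≤ F_{t,m,θ}^μ(x,r) ≤ F_{t,n,θ}^μ(x,r) + μ(ℝⁿ) r^(t(1−θ))`. -/
theorem statement9 (n : ℕ) (μ : Measure (EuclideanSpace ℝ (Fin n))) [IsFiniteMeasure μ]
    (m : ℕ) (hm : 1 ≤ m) (hmn : m ≤ n) (θ t : ℝ) (hθ : θ ∈ Set.Ioc (0 : ℝ) 1)
    (ht : t ∈ Set.Icc (0 : ℝ) (m : ℝ)) (x : EuclideanSpace ℝ (Fin n)) (r : ℝ)
    (hr : r ∈ Set.Ioc (0 : ℝ) 1) :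
    Fpot (m : ℝ) μ x r ≤ Ftheta t (m : ℝ) θ μ x r ∧
    Ftheta t (m : ℝ) θ μ x r
      ≤ Ftheta t (n : ℝ) θ μ x r + μ Set.univ * ENNReal.ofReal (r ^ (t * (1 - θ))) := by
  have hc : (0:ℝ) ≤ r ^ (t * (1 - θ)) := Real.rpow_nonneg hr.1.le _
  constructor
  · refine lintegral_mono fun y => ?_
    split_ifs with h
    · exact le_rfl
    · refine ENNReal.ofReal_le_ofReal ?_
      have hd : 0 < ‖x - y‖ := by
        rw [norm_pos_iff, sub_ne_zero]; exact fun e => h e.symm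
      exact key1 r ‖x - y‖ t m θ hr.1 hr.2 hd ht.1 ht.2 hθ.2
  · calc Ftheta t (m : ℝ) θ μ x r
        ≤ ∫⁻ y, (ENNReal.ofReal (if y = x then 1 else
            min (min 1 (r ^ t * ‖x - y‖ ^ (-t)))
              (r ^ (θ * ((n:ℝ) - t) + t) * ‖x - y‖ ^ (-(n:ℝ))))
            + ENNReal.ofReal (r ^ (t * (1 - θ)))) ∂μ := by
          refine lintegral_mono fun y => ?_
          split_ifs with h
          · exact le_self_add
          · have hd : 0 < ‖x - y‖ := by
              rw [norm_pos_iff, sub_ne_zero]; exact fun e => h e.symm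
            have hnn : ∀ a b : ℝ, 0 ≤ r ^ a * ‖x - y‖ ^ b :=
              fun a b => mul_nonneg (Real.rpow_nonneg hr.1.le _)
                (Real.rpow_nonneg (norm_nonneg _) _)
            rw [← ENNReal.ofReal_add (le_min (le_min zero_le_one (hnn _ _)) (hnn _ _)) hc]
            refine ENNReal.ofReal_le_ofReal ?_
            exact key2 r ‖x - y‖ t m n θ hr.1 hd ht.1 ht.2 (by exact_mod_cast hmn) hθ.2
      _ = Ftheta t (n : ℝ) θ μ x r + μ Set.univ * ENNReal.ofReal (r ^ (t * (1 - θ))) := by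
          rw [lintegral_add_right _ measurable_const, lintegral_const, Ftheta]; ring
end
end
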